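/- arXiv:1202.0266 — 2 statements merged into one kernel-verified Lean document; each statement's English description precedes it below -/
import Mathlib

section
/- In the complex reflection group G(m,m,n) with m ≥ 3 and n ≥ 3, the element g = diag(ζ, ζ^{−2}, ζ, 1, …, 1), where ζ = e^{2πi/m}, has codim(g) = 3 and reflection length ℓ(g) = 4. -/
/-!
Codimension is subadditive, so a factorization of `g` into reflections has at least
`codim g = 3` factors. A reflection of `G(m,m,n)` is a monomial matrix `δσ` with `∏ δ = 1`;
it cannot be diagonal (a diagonal matrix of determinant `1` does not have codimension `1`)
and `σ` cannot move three points (two independent columns of `δσ - 1`), so `σ` is a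
transposition and the reflection has determinant `-1`. Since `det g = 1`, every factorization
has even length, hence at least `4`; and four suffice, since `diag(ζ, ζ⁻¹, 1)` and
`diag(1, ζ⁻¹, ζ)` are each a product of two transposition-type reflections.
-/


open Module Matrix

noncomputable section

/-- The primitive m-th root of unity e^{2πi/m}. -/
def zeta (m : ℕ) : ℂ := Complex.exp (2 * Real.pi * Complex.I / m)

/-- codim of a matrix: n minus the dimension of its fixed space. -/
def codimM {n : ℕ} (M : Matrix (Fin n) (Fin n) ℂ) : ℕ :=
  n - finrank ℂ (LinearMap.ker (M.mulVecLin - LinearMap.id))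

/-- Membership in the monomial reflection group G(m,p,n): a monomial matrix with
entries m-th roots of unity whose nonzero entries multiply to an (m/p)-th root of unity. -/
def InG (m p n : ℕ) (M : Matrix (Fin n) (Fin n) ℂ) : Prop :=
  ∃ (σ : Equiv.Perm (Fin n)) (d : Fin n → ℂ),
    (∀ j, d j ^ m = 1) ∧ ((∏ j, d j) ^ (m / p) = 1) ∧
    ∀ i j, M i j = if i = σ j then d j else 0

/-- A reflection of G(m,p,n): a nonidentity element of the group fixing a hyperplane
pointwise (i.e. of codimension one). -/
def IsReflM (m p n : ℕ) (M : Matrix (Fin n) (Fin n) ℂ) : Prop :=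
  InG m p n M ∧ M ≠ 1 ∧ codimM M = 1

/-- Reflection length in G(m,p,n). -/
def reflLenM (m p n : ℕ) (M : Matrix (Fin n) (Fin n) ℂ) : ℕ :=
  sInf {k | ∃ l : List (Matrix (Fin n) (Fin n) ℂ),
    (∀ s ∈ l, IsReflM m p n s) ∧ l.length = k ∧ l.prod = M}

/-- Transposition-type reflection: swaps coordinates i and j scaling by ζ^a and ζ^{-a}. -/
def IsTranspRefl (m n : ℕ) (M : Matrix (Fin n) (Fin n) ℂ) : Prop :=
  ∃ (i j : Fin n) (c : ℂ), i ≠ j ∧ c ^ m = 1 ∧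
    M = Matrix.of (fun k l =>
      if k = i ∧ l = j then c
      else if k = j ∧ l = i then c⁻¹
      else if k = l ∧ k ≠ i ∧ k ≠ j then 1 else 0)

/-- The codimension order relation on matrices. -/
def codimLeM {n : ℕ} (a c : Matrix (Fin n) (Fin n) ℂ) : Prop :=
  codimM a + codimM (a⁻¹ * c) = codimM c

open Equiv Finset

section Monomial

variable {ι R : Type*} [DecidableEq ι]

def monomialMatrix [Zero R] (σ : Perm ι) (d : ι → R) : Matrix ι ι R :=
  of fun i j => if i = σ j then d j else 0

@[simp]
theorem monomialMatrix_apply [Zero R] (σ : Perm ι) (d : ι → R) (i j : ι) :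
    monomialMatrix σ d i j = if i = σ j then d j else 0 := rfl

theorem monomialMatrix_one [Zero R] (d : ι → R) : monomialMatrix 1 d = diagonal d := by
  ext i j
  by_cases h : i = j <;> simp [h]

variable [Fintype ι]

theorem monomialMatrix_mul_monomialMatrix [NonUnitalNonAssocSemiring R] (σ τ : Perm ι)
    (d e : ι → R) :
    monomialMatrix σ d * monomialMatrix τ e = monomialMatrix (σ * τ) (fun j => d (τ j) * e j) := by
  ext i k
  simp only [mul_apply, monomialMatrix_apply, ite_mul, mul_ite, zero_mul, mul_zero]
  rw [Finset.sum_eq_single (τ k)] <;> aesop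

theorem monomialMatrix_mulVec [NonUnitalNonAssocSemiring R] (σ : Perm ι) (d v : ι → R) :
    monomialMatrix σ d *ᵥ v = fun i => d (σ.symm i) * v (σ.symm i) := by
  ext i
  simp only [mulVec, dotProduct, monomialMatrix_apply, ite_mul, zero_mul]
  rw [Finset.sum_eq_single (σ.symm i)] <;> aesop

theorem det_monomialMatrix [CommRing R] (σ : Perm ι) (d : ι → R) :
    (monomialMatrix σ d).det = Perm.sign σ * ∏ j, d j := by
  have : monomialMatrix σ d = (diagonal d).submatrix σ.symm id := by
    ext i j
    simp only [monomialMatrix_apply, submatrix_apply, diagonal_apply, id, symm_apply_eq]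
    aesop
  rw [this, det_permute, det_diagonal, Perm.sign_symm]

end Monomial

section Codim

variable {n : ℕ}

def fixedSubspace (M : Matrix (Fin n) (Fin n) ℂ) : Submodule ℂ (Fin n → ℂ) :=
  LinearMap.ker (M.mulVecLin - LinearMap.id)

theorem mem_fixedSubspace {M : Matrix (Fin n) (Fin n) ℂ} {v : Fin n → ℂ} :
    v ∈ fixedSubspace M ↔ M *ᵥ v = v := by
  simp [fixedSubspace, sub_eq_zero]

theorem codimM_eq_sub_finrank (M : Matrix (Fin n) (Fin n) ℂ) :
    codimM M = n - finrank ℂ (fixedSubspace M) := rfl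

theorem codimM_eq_rank (M : Matrix (Fin n) (Fin n) ℂ) : codimM M = (M - 1).rank := by
  have hker : fixedSubspace M = LinearMap.ker (M - 1).mulVecLin := by
    ext v
    simp [mem_fixedSubspace, sub_eq_zero]
  have := LinearMap.finrank_range_add_finrank_ker (M - 1).mulVecLin
  rw [finrank_fin_fun, ← hker] at this
  rw [codimM_eq_sub_finrank, rank]
  omega

theorem codimM_mul_le (A B : Matrix (Fin n) (Fin n) ℂ) :
    codimM (A * B) ≤ codimM A + codimM B := by
  have hinf : fixedSubspace A ⊓ fixedSubspace B ≤ fixedSubspace (A * B) := by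
    intro v ⟨hA, hB⟩
    rw [SetLike.mem_coe, mem_fixedSubspace] at hA hB
    rw [mem_fixedSubspace, ← mulVec_mulVec, hB, hA]
  have hdim := Submodule.finrank_sup_add_finrank_inf_eq (fixedSubspace A) (fixedSubspace B)
  have hsup := (fixedSubspace A ⊔ fixedSubspace B).finrank_le
  have hmono := Submodule.finrank_mono hinf
  have hA := (fixedSubspace A).finrank_le
  have hB := (fixedSubspace B).finrank_le
  rw [finrank_fin_fun] at hsup hA hB
  simp only [codimM_eq_sub_finrank]
  omega

theorem codimM_list_prod_le (l : List (Matrix (Fin n) (Fin n) ℂ))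
    (h : ∀ s ∈ l, codimM s = 1) : codimM l.prod ≤ l.length := by
  induction l with
  | nil => simp [codimM_eq_rank]
  | cons a l ih =>
    rw [List.prod_cons, List.length_cons, ← h a List.mem_cons_self, add_comm]
    exact (codimM_mul_le a l.prod).trans
      (add_le_add_right (ih fun s hs => h s (List.mem_cons_of_mem a hs)) _)

theorem codimM_le_one_of_ker_le (M : Matrix (Fin n) (Fin n) ℂ) (φ : (Fin n → ℂ) →ₗ[ℂ] ℂ)
    (h : ∀ v, φ v = 0 → M *ᵥ v = v) : codimM M ≤ 1 := by
  have hker : LinearMap.ker φ ≤ fixedSubspace M := fun v hv => mem_fixedSubspace.2 (h v hv)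
  have hdim := LinearMap.finrank_range_add_finrank_ker φ
  have hrange := (LinearMap.range φ).finrank_le
  have hmono := Submodule.finrank_mono hker
  rw [finrank_fin_fun] at hdim
  rw [Module.finrank_self] at hrange
  rw [codimM_eq_sub_finrank]
  omega

theorem card_le_codimM_of_det_submatrix_ne_zero {k : ℕ} (M : Matrix (Fin n) (Fin n) ℂ)
    (r c : Fin k → Fin n) (h : ((M - 1).submatrix r c).det ≠ 0) : k ≤ codimM M := by
  have := rank_submatrix_le (M - 1) r c
  rwa [rank_of_det_ne_zero h, Fintype.card_fin, ← codimM_eq_rank] at this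

theorem codimM_diagonal (w : Fin n → ℂ) :
    codimM (diagonal w) = Fintype.card {i // w i ≠ 1} := by
  rw [codimM_eq_rank, ← diagonal_one, diagonal_sub, rank_diagonal]
  exact Fintype.card_congr (Equiv.subtypeEquivRight fun i => sub_ne_zero)

theorem codimM_diagonal_ne_one {w : Fin n → ℂ} (hw : ∏ i, w i = 1) :
    codimM (diagonal w) ≠ 1 := by
  rw [codimM_diagonal, Ne, Fintype.card_eq_one_iff]
  rintro ⟨⟨i, hi⟩, huniq⟩
  have hothers : ∀ j, j ≠ i → w j = 1 := fun j hj => by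
    by_contra hwj
    exact hj (congrArg Subtype.val (huniq ⟨j, hwj⟩))
  rw [Finset.prod_eq_single i (fun j _ hj => hothers j hj) (by simp)] at hw
  exact hi hw

end Codim

section Reflections

variable {m n : ℕ}

theorem inG_self_iff (hm : 0 < m) {M : Matrix (Fin n) (Fin n) ℂ} :
    InG m m n M ↔ ∃ (σ : Perm (Fin n)) (d : Fin n → ℂ),
      (∀ j, d j ^ m = 1) ∧ ∏ j, d j = 1 ∧ M = monomialMatrix σ d := by
  simp only [InG, Nat.div_self hm, pow_one, ← monomialMatrix_apply, ← Matrix.ext_iff]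

theorem two_le_codimM_monomialMatrix {σ : Perm (Fin n)} (d : Fin n → ℂ) {i j : Fin n}
    (hi : σ i ≠ i) (hj : σ j ≠ j) (hji : j ≠ i) (hjσi : j ≠ σ i) :
    2 ≤ codimM (monomialMatrix σ d) := by
  refine card_le_codimM_of_det_submatrix_ne_zero _ ![i, j] ![i, j] ?_
  rw [det_fin_two]
  simp [hi.symm, hj.symm, hji, hjσi]

theorem card_support_eq_two_of_codimM_eq_one {σ : Perm (Fin n)} {d : Fin n → ℂ}
    (hd : ∏ j, d j = 1) (h : codimM (monomialMatrix σ d) = 1) : #σ.support = 2 := by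
  have hσ : σ ≠ 1 := by
    rintro rfl
    exact codimM_diagonal_ne_one hd (monomialMatrix_one d ▸ h)
  refine le_antisymm ?_ (Perm.two_le_card_support_of_ne_one hσ)
  by_contra! h3
  obtain ⟨i, hi⟩ := card_pos.1 (by omega : 0 < #σ.support)
  obtain ⟨j, hj, hji⟩ := exists_mem_notMem_of_card_lt_card (card_le_two.trans_lt h3)
  rw [Perm.mem_support] at hi hj
  simp only [mem_insert, mem_singleton, not_or] at hji
  have := two_le_codimM_monomialMatrix d hi hj hji.1 hji.2
  omega

theorem IsReflM.det_eq_neg_one (hm : 0 < m) {M : Matrix (Fin n) (Fin n) ℂ}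
    (h : IsReflM m m n M) : M.det = -1 := by
  obtain ⟨hG, -, hcodim⟩ := h
  obtain ⟨σ, d, -, hd, rfl⟩ := (inG_self_iff hm).1 hG
  have hswap := Perm.card_support_eq_two.1 (card_support_eq_two_of_codimM_eq_one hd hcodim)
  simp [det_monomialMatrix, hd, hswap.sign_eq]

theorem det_list_prod_of_isReflM (hm : 0 < m) {l : List (Matrix (Fin n) (Fin n) ℂ)}
    (hl : ∀ s ∈ l, IsReflM m m n s) : l.prod.det = (-1) ^ l.length := by
  induction l with
  | nil => simp
  | cons a l ih =>
    rw [List.prod_cons, det_mul, (hl a List.mem_cons_self).det_eq_neg_one hm,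
      ih fun s hs => hl s (List.mem_cons_of_mem a hs), List.length_cons, pow_succ']

theorem reflLenM_eq_codimM_add_one (hm : 0 < m) {g : Matrix (Fin n) (Fin n) ℂ}
    {l : List (Matrix (Fin n) (Fin n) ℂ)} (hl : ∀ s ∈ l, IsReflM m m n s) (hprod : l.prod = g)
    (hlen : l.length = codimM g + 1) : reflLenM m m n g = codimM g + 1 := by
  have hmem : codimM g + 1 ∈ {k | ∃ l : List (Matrix (Fin n) (Fin n) ℂ),
      (∀ s ∈ l, IsReflM m m n s) ∧ l.length = k ∧ l.prod = g} := ⟨l, hl, hlen, hprod⟩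
  refine le_antisymm (Nat.sInf_le hmem) (le_csInf ⟨_, hmem⟩ ?_)
  rintro _ ⟨l', hl', rfl, hprod'⟩
  have hcodim : codimM g ≤ l'.length :=
    hprod' ▸ codimM_list_prod_le l' fun s hs => (hl' s hs).2.2
  have hparity : (-1 : ℂ) ^ l'.length = (-1) ^ l.length := by
    rw [← det_list_prod_of_isReflM hm hl', ← det_list_prod_of_isReflM hm hl, hprod, hprod']
  rcases hcodim.eq_or_lt with heq | hlt
  · rw [hlen, ← heq, pow_succ, mul_neg_one] at hparity
    exact absurd (self_eq_neg.1 hparity) (pow_ne_zero _ (by norm_num))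
  · exact hlt

-- The paper's `δσ` with `σ = (i j)` and `δ = diag(1, …, c, …, c⁻¹, …, 1)`, `c` in position `i`.
def transReflection (i j : Fin n) (c : ℂ) : Matrix (Fin n) (Fin n) ℂ :=
  diagonal (Pi.mulSingle i c * Pi.mulSingle j c⁻¹) * monomialMatrix (swap i j) 1

theorem transReflection_eq_monomialMatrix (i j : Fin n) (c : ℂ) :
    transReflection i j c = monomialMatrix (swap i j)
      fun k => (Pi.mulSingle i c * Pi.mulSingle j c⁻¹ : Fin n → ℂ) (swap i j k) := by
  rw [transReflection, ← monomialMatrix_one, monomialMatrix_mul_monomialMatrix, one_mul]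
  simp only [Pi.one_apply, mul_one]

theorem transReflection_mul_transReflection_one (i j : Fin n) (c : ℂ) :
    transReflection i j c * transReflection i j 1 =
      diagonal (Pi.mulSingle i c * Pi.mulSingle j c⁻¹) := by
  have hP : transReflection i j 1 = monomialMatrix (swap i j) 1 := by
    simp [transReflection]
  rw [hP, transReflection, mul_assoc, monomialMatrix_mul_monomialMatrix, Equiv.swap_mul_self]
  simp [monomialMatrix_one]

theorem isReflM_transReflection (hm : 0 < m) {i j : Fin n} (hij : i ≠ j) {c : ℂ}
    (hc : c ^ m = 1) : IsReflM m m n (transReflection i j c) := by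
  have hc0 : c ≠ 0 := by
    rintro rfl
    simp [zero_pow hm.ne'] at hc
  refine ⟨(inG_self_iff hm).2
    ⟨swap i j, _, fun k => ?_, ?_, transReflection_eq_monomialMatrix i j c⟩,
    fun h => ?_, le_antisymm ?_ ?_⟩
  · simp only [Pi.mul_apply, Pi.mulSingle_apply, mul_pow]
    split_ifs <;> simp [hc, inv_pow]
  · refine (Equiv.prod_comp (swap i j) _).trans ?_
    simp [prod_mul_distrib, hc0]
  · have := congrFun₂ h i i
    simp [transReflection_eq_monomialMatrix, hij] at this
  · refine codimM_le_one_of_ker_le _ (LinearMap.proj i - c • LinearMap.proj j) fun v hv => ?_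
    have hvi : v i = c * v j := sub_eq_zero.1 (by simpa using hv)
    rw [transReflection_eq_monomialMatrix, monomialMatrix_mulVec]
    ext k
    rcases eq_or_ne k i with rfl | hki
    · simp [hij, hvi]
    rcases eq_or_ne k j with rfl | hkj
    · simp [hvi, hki, hc0]
    · simp [swap_apply_of_ne_of_ne hki hkj, hki, hkj]
  · refine card_le_codimM_of_det_submatrix_ne_zero _ ![i] ![i] ?_
    rw [det_fin_one]
    simp [transReflection_eq_monomialMatrix, hij]

end Reflections

section ThreeCoordinates

variable {n : ℕ} {a₀ a₁ a₂ : Fin n}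

theorem codimM_diagonal_three (h01 : a₀ ≠ a₁) (h02 : a₀ ≠ a₂) (h12 : a₁ ≠ a₂) {w₀ w₁ w₂ : ℂ}
    (hw₀ : w₀ ≠ 1) (hw₁ : w₁ ≠ 1) (hw₂ : w₂ ≠ 1) :
    codimM (diagonal fun i =>
      if i = a₀ then w₀ else if i = a₁ then w₁ else if i = a₂ then w₂ else 1) = 3 := by
  rw [codimM_diagonal, Fintype.card_subtype, card_eq_three]
  refine ⟨a₀, a₁, a₂, h01, h02, h12, ?_⟩
  ext k
  by_cases k = a₀ <;> by_cases k = a₁ <;> by_cases k = a₂ <;> simp_all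

theorem list_prod_transReflection (h01 : a₀ ≠ a₁) (h02 : a₀ ≠ a₂) (h12 : a₁ ≠ a₂) (z : ℂ) :
    [transReflection a₀ a₁ z, transReflection a₀ a₁ 1,
      transReflection a₂ a₁ z, transReflection a₂ a₁ 1].prod =
      diagonal fun i =>
        if i = a₀ then z else if i = a₁ then z⁻¹ * z⁻¹ else if i = a₂ then z else 1 := by
  simp only [List.prod_cons, List.prod_nil, mul_one]
  rw [← mul_assoc, transReflection_mul_transReflection_one, transReflection_mul_transReflection_one,
    diagonal_mul_diagonal]
  congr 1
  ext k
  by_cases k = a₀ <;> by_cases k = a₁ <;> by_cases k = a₂ <;> simp_all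

end ThreeCoordinates

theorem gmmn_length_ne_codim (m n : ℕ) (hm : 3 ≤ m) (hn : 3 ≤ n)
    (g : Matrix (Fin n) (Fin n) ℂ)
    (hg : g = Matrix.diagonal (fun i : Fin n =>
      if i = ⟨0, by omega⟩ then zeta m
      else if i = ⟨1, by omega⟩ then zeta m ^ (m - 2)
      else if i = ⟨2, by omega⟩ then zeta m else 1)) :
    codimM g = 3 ∧ reflLenM m m n g = 4 := by
  have hζ : IsPrimitiveRoot (zeta m) m := Complex.isPrimitiveRoot_exp m (by omega)
  have hζm2 : zeta m ^ (m - 2) = (zeta m)⁻¹ * (zeta m)⁻¹ := by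
    rw [pow_sub₀ _ (hζ.ne_zero (by omega)) (by omega), hζ.pow_eq_one, one_mul, sq, mul_inv]
  set a₀ : Fin n := ⟨0, by omega⟩
  set a₁ : Fin n := ⟨1, by omega⟩
  set a₂ : Fin n := ⟨2, by omega⟩
  have h01 : a₀ ≠ a₁ := by simp [a₀, a₁, Fin.ext_iff]
  have h02 : a₀ ≠ a₂ := by simp [a₀, a₂, Fin.ext_iff]
  have h12 : a₁ ≠ a₂ := by simp [a₁, a₂, Fin.ext_iff]
  have hcodim : codimM g = 3 := hg ▸ codimM_diagonal_three h01 h02 h12 (hζ.ne_one (by omega))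
    (hζ.pow_ne_one_of_pos_of_lt (by omega) (by omega)) (hζ.ne_one (by omega))
  have hprod : [transReflection a₀ a₁ (zeta m), transReflection a₀ a₁ 1,
      transReflection a₂ a₁ (zeta m), transReflection a₂ a₁ 1].prod = g := by
    rw [list_prod_transReflection h01 h02 h12, hg, hζm2]
  refine ⟨hcodim, (reflLenM_eq_codimM_add_one (by omega) ?_ hprod (by simp [hcodim])).trans
    (by rw [hcodim])⟩
  simp only [List.mem_cons, List.not_mem_nil, or_false]
  rintro s (rfl | rfl | rfl | rfl)
  · exact isReflM_transReflection (by omega) h01 hζ.pow_eq_one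
  · exact isReflM_transReflection (by omega) h01 (one_pow m)
  · exact isReflM_transReflection (by omega) h12.symm hζ.pow_eq_one
  · exact isReflM_transReflection (by omega) h12.symm (one_pow m)
end
end

section
/- If a, b are nonidentity diagonal elements of G(m,p,n) with codim(a) + codim(b) = codim(ab), then ab is not p-connected. Consequently distinct p-connected elements of G(m,p,n) are incomparable in the codimension order. -/
open Module Matrix

noncomputable section

/-- Diagonal element of G(m,_,n) with eigenvalue exponents c. -/
def DiagOf (m : ℕ) {n : ℕ} (c : Fin n → ZMod m) : Matrix (Fin n) (Fin n) ℂ :=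
  Matrix.diagonal (fun i => zeta m ^ (c i).val)

/-- Indices of the non-1 eigenvalues. -/
def supportC {m n : ℕ} (c : Fin n → ZMod m) : Finset (Fin n) :=
  Finset.univ.filter (fun i => c i ≠ 0)

/-- p-connectedness: p divides the sum of the non-1 eigenvalue exponents, but p does not
divide the sum over any proper nonempty subset of them. -/
def PConnected (m p : ℕ) {n : ℕ} (c : Fin n → ZMod m) : Prop :=
  (supportC c).Nonempty ∧ ((p : ZMod m) ∣ ∑ i ∈ supportC c, c i) ∧
    ∀ I ⊆ supportC c, I.Nonempty → I ≠ supportC c → ¬ (p : ZMod m) ∣ ∑ i ∈ I, c i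

lemma zeta_prim (m : ℕ) (hm : 0 < m) : IsPrimitiveRoot (zeta m) m := by
  have := Complex.isPrimitiveRoot_exp m hm.ne'
  simpa [zeta] using this

lemma zeta_pow_val_eq_one_iff {m : ℕ} (hm : 0 < m) (x : ZMod m) :
    zeta m ^ x.val = 1 ↔ x = 0 := by
  haveI : NeZero m := ⟨hm.ne'⟩
  rw [(zeta_prim m hm).pow_eq_one_iff_dvd]
  constructor
  · intro h
    exact (ZMod.val_eq_zero x).mp (Nat.eq_zero_of_dvd_of_lt h (ZMod.val_lt x))
  · rintro rfl; simp [ZMod.val_zero]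

lemma codim_diagOf {m n : ℕ} (hm : 0 < m) (c : Fin n → ZMod m) :
    codimM (DiagOf m c) = (supportC c).card := by
  classical
  unfold codimM DiagOf
  have h1 : (Matrix.diagonal (fun i => zeta m ^ (c i).val)).mulVecLin - LinearMap.id
      = (Matrix.diagonal (fun i => zeta m ^ (c i).val - 1)).mulVecLin := by
    rw [← Matrix.mulVecLin_one]
    apply LinearMap.ext
    intro v
    funext i
    simp [Matrix.mulVecLin, Matrix.mulVec_diagonal, sub_mul]
  rw [h1]
  have hrn := LinearMap.finrank_range_add_finrank_ker
      (Matrix.diagonal (fun i => zeta m ^ (c i).val - 1)).mulVecLin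
  have hrk : finrank ℂ (LinearMap.range (Matrix.diagonal (fun i => zeta m ^ (c i).val - 1)).mulVecLin)
      = (supportC c).card := by
    have := Matrix.rank_diagonal (fun i => zeta m ^ (c i).val - 1)
    rw [Matrix.rank] at this
    rw [this, Fintype.card_subtype]
    congr 1
    apply Finset.filter_congr
    intro i _
    simp only [ne_eq, sub_eq_zero]
    rw [show (zeta m ^ (c i).val = 1) = (c i = 0) from propext (zeta_pow_val_eq_one_iff hm _)]
  have hn : finrank ℂ (Fin n → ℂ) = n := by simp
  omega

lemma diagOf_eq_one_iff {m n : ℕ} (hm : 0 < m) (c : Fin n → ZMod m) :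
    DiagOf m c = 1 ↔ c = 0 := by
  constructor
  · intro h
    funext i
    have := congrArg (fun M => M i i) h
    simp [DiagOf, Matrix.diagonal, Matrix.one_apply] at this
    exact (zeta_pow_val_eq_one_iff hm _).mp this
  · rintro rfl
    simp [DiagOf, ZMod.val_zero]

lemma diagOf_mul {m n : ℕ} (hm : 0 < m) (c₁ c₂ : Fin n → ZMod m) :
    DiagOf m c₁ * DiagOf m c₂ = DiagOf m (c₁ + c₂) := by
  haveI : NeZero m := ⟨hm.ne'⟩
  unfold DiagOf
  rw [Matrix.diagonal_mul_diagonal]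
  have : (fun i => zeta m ^ (c₁ i).val * zeta m ^ (c₂ i).val)
      = fun i => zeta m ^ ((c₁ + c₂) i).val := by
    funext i
    rw [← pow_add, Pi.add_apply, ZMod.val_add]
    conv_lhs => rw [← Nat.div_add_mod ((c₁ i).val + (c₂ i).val) m]
    rw [pow_add, pow_mul, (zeta_prim m hm).pow_eq_one, one_pow, one_mul]
  rw [this]

lemma sum_support_eq {m n : ℕ} (c : Fin n → ZMod m) :
    ∑ i ∈ supportC c, c i = ∑ i, c i := by
  apply Finset.sum_subset (Finset.subset_univ _)
  intro i _ hi
  simpa [supportC] using hi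

lemma key {m p n : ℕ} (hm : 0 < m) (c₁ c₂ : Fin n → ZMod m)
    (h1 : DiagOf m c₁ ≠ 1) (h2 : DiagOf m c₂ ≠ 1)
    (hd1 : (p : ZMod m) ∣ ∑ i, c₁ i)
    (hcod : codimM (DiagOf m c₁) + codimM (DiagOf m c₂)
      = codimM (DiagOf m c₁ * DiagOf m c₂)) :
    ¬ PConnected m p (c₁ + c₂) := by
  classical
  rw [diagOf_mul hm, codim_diagOf hm, codim_diagOf hm, codim_diagOf hm] at hcod
  have hsub : supportC (c₁ + c₂) ⊆ supportC c₁ ∪ supportC c₂ := by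
    intro i hi
    simp only [supportC, Finset.mem_filter, Finset.mem_univ, true_and, Finset.mem_union,
      Pi.add_apply] at hi ⊢
    by_contra h
    push_neg at h
    rw [h.1, h.2, add_zero] at hi
    exact hi rfl
  have hle : (supportC (c₁ + c₂)).card ≤ (supportC c₁ ∪ supportC c₂).card :=
    Finset.card_le_card hsub
  have hle2 := Finset.card_union_add_card_inter (supportC c₁) (supportC c₂)
  have hinter : (supportC c₁ ∩ supportC c₂).card = 0 := by omega
  have hdisj : Disjoint (supportC c₁) (supportC c₂) := by
    rw [Finset.disjoint_iff_inter_eq_empty]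
    exact Finset.card_eq_zero.mp hinter
  have hsupeq : supportC (c₁ + c₂) = supportC c₁ ∪ supportC c₂ := by
    apply Finset.eq_of_subset_of_card_le hsub
    omega
  have hn1 : (supportC c₁).Nonempty := by
    obtain ⟨i, hi⟩ : ∃ i, c₁ i ≠ 0 := by
      by_contra h; push_neg at h
      exact h1 ((diagOf_eq_one_iff hm c₁).mpr (funext h))
    exact ⟨i, by simp [supportC, hi]⟩
  have hn2 : (supportC c₂).Nonempty := by
    obtain ⟨i, hi⟩ : ∃ i, c₂ i ≠ 0 := by
      by_contra h; push_neg at h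
      exact h2 ((diagOf_eq_one_iff hm c₂).mpr (funext h))
    exact ⟨i, by simp [supportC, hi]⟩
  rintro ⟨-, -, hprop⟩
  apply hprop (supportC c₁) (by rw [hsupeq]; exact Finset.subset_union_left) hn1
  · intro heq
    obtain ⟨j, hj⟩ := hn2
    have hj1 : j ∈ supportC c₁ := by
      rw [heq, hsupeq]; exact Finset.mem_union_right _ hj
    exact (Finset.disjoint_left.mp hdisj hj1) hj
  · have hz : ∀ i ∈ supportC c₁, (c₁ + c₂) i = c₁ i := by
      intro i hi
      have : i ∉ supportC c₂ := Finset.disjoint_left.mp hdisj hi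
      simp only [supportC, Finset.mem_filter, Finset.mem_univ, true_and, not_not] at this
      simp [this]
    rw [Finset.sum_congr rfl hz, sum_support_eq c₁]
    exact hd1

theorem pConnected_incomparable (m p n : ℕ) (hm : 0 < m) (hp : 0 < p) (hdvd : p ∣ m) :
    (∀ c₁ c₂ : Fin n → ZMod m, DiagOf m c₁ ≠ 1 → DiagOf m c₂ ≠ 1 →
      (p : ZMod m) ∣ ∑ i, c₁ i → (p : ZMod m) ∣ ∑ i, c₂ i →
      codimM (DiagOf m c₁) + codimM (DiagOf m c₂) = codimM (DiagOf m c₁ * DiagOf m c₂) →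
      ¬ PConnected m p (c₁ + c₂)) ∧
    (∀ e₁ e₂ : Fin n → ZMod m, PConnected m p e₁ → PConnected m p e₂ →
      DiagOf m e₁ ≠ DiagOf m e₂ → ¬ codimLeM (DiagOf m e₁) (DiagOf m e₂)) := by
  classical
  constructor
  · intro c₁ c₂ h1 h2 hd1 _ hcod
    exact key hm c₁ c₂ h1 h2 hd1 hcod
  · intro e₁ e₂ hpc1 hpc2 hne hle
    -- a⁻¹ * c = DiagOf m (e₂ - e₁)
    have hdet : IsUnit (DiagOf m e₁).det := by
      rw [DiagOf, Matrix.det_diagonal, isUnit_iff_ne_zero, Finset.prod_ne_zero_iff]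
      intro i _
      exact pow_ne_zero _ (Complex.exp_ne_zero _)
    haveI := Matrix.invertibleOfIsUnitDet _ hdet
    have hmul : DiagOf m e₁ * DiagOf m (e₂ - e₁) = DiagOf m e₂ := by
      rw [diagOf_mul hm, add_sub_cancel]
    have hinv : (DiagOf m e₁)⁻¹ * DiagOf m e₂ = DiagOf m (e₂ - e₁) := by
      rw [← hmul, Matrix.inv_mul_cancel_left_of_invertible]
    rw [codimLeM, hinv, ← hmul] at hle
    have h1 : DiagOf m e₁ ≠ 1 := by
      rw [Ne, diagOf_eq_one_iff hm]
      intro h0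
      obtain ⟨i, hi⟩ := hpc1.1
      simp [supportC, h0] at hi
    have h2 : DiagOf m (e₂ - e₁) ≠ 1 := by
      rw [Ne, diagOf_eq_one_iff hm, sub_eq_zero]
      intro h0
      exact hne (by rw [h0])
    have hd1 : (p : ZMod m) ∣ ∑ i, e₁ i := by
      rw [← sum_support_eq e₁]; exact hpc1.2.1
    have := key hm e₁ (e₂ - e₁) h1 h2 hd1 hle
    rw [add_sub_cancel] at this
    exact this hpc2
end
end
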